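/- arXiv:2111.03614 — 2 statements merged into one kernel-verified Lean document; each statement's English description precedes it below -/
import Mathlib

section
/- Let x : Ω → ℝ^m and w : Ω → ℝ^r be random vectors on a probability space (Ω, μ) whose coordinate functions are measurable and square-integrable, and let E_{ww}⁺ be a Moore–Penrose pseudoinverse of E_{ww}. For an arbitrary matrix M ∈ ℝ^{r×r}, set T = E_{xw} E_{ww}⁺ (I_r + M (I_r − E_{ww} E_{ww}⁺)). Then T minimizes the mean square error among all linear estimators: for every T' ∈ ℝ^{m×r}, ∫_Ω ‖x(ω) − T w(ω)‖₂² dμ(ω) ≤ ∫_Ω ‖x(ω) − T' w(ω)‖₂² dμ(ω). -/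
open MeasureTheory Matrix

/-- Second-moment matrix `E_{uv}` of two random vectors. -/
noncomputable def secondMoment {Ω : Type*} [MeasurableSpace Ω] (μ : Measure Ω)
    {a b : ℕ} (u : Ω → Fin a → ℝ) (v : Ω → Fin b → ℝ) : Matrix (Fin a) (Fin b) ℝ :=
  Matrix.of fun i j => ∫ ω, u ω i * v ω j ∂μ

/-- Mean square error `∫ ‖x(ω) − T w(ω)‖₂² dμ`. -/
noncomputable def mse {Ω : Type*} [MeasurableSpace Ω] (μ : Measure Ω)
    {m n : ℕ} (x : Ω → Fin m → ℝ) (w : Ω → Fin n → ℝ)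
    (T : Matrix (Fin m) (Fin n) ℝ) : ℝ :=
  ∫ ω, ∑ i, (x ω i - T.mulVec (w ω) i) ^ 2 ∂μ

/-- `B` is a Moore–Penrose pseudoinverse of `A`. -/
def IsMoorePenrose {a b : ℕ} (A : Matrix (Fin a) (Fin b) ℝ)
    (B : Matrix (Fin b) (Fin a) ℝ) : Prop :=
  A * B * A = A ∧ B * A * B = B ∧ (A * B)ᵀ = A * B ∧ (B * A)ᵀ = B * A

section Aux

variable {Ω : Type*} [MeasurableSpace Ω] {μ : Measure Ω}

lemma int_mul_L2 {f g : Ω → ℝ} (hf : MemLp f 2 μ) (hg : MemLp g 2 μ) :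
    Integrable (fun ω => f ω * g ω) μ := by
  have h := hg.smul (p := 2) (q := 2) (r := 1) hf
  rw [memLp_one_iff_integrable] at h
  exact h

lemma int_sq_L2 {f : Ω → ℝ} (hf : MemLp f 2 μ) :
    Integrable (fun ω => f ω ^ 2) μ := by
  simpa [pow_two] using int_mul_L2 hf hf

lemma memL2_sum {ι : Type*} (s : Finset ι) (f : ι → Ω → ℝ)
    (hf : ∀ i ∈ s, MemLp (f i) 2 μ) : MemLp (fun ω => ∑ i ∈ s, f i ω) 2 μ := by
  have := memLp_finset_sum' s hf
  convert this using 1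
  ext ω; simp

end Aux

theorem optimal_linear_estimator {Ω : Type*} [MeasurableSpace Ω] (μ : Measure Ω)
    [IsProbabilityMeasure μ] {m r : ℕ}
    (x : Ω → Fin m → ℝ) (w : Ω → Fin r → ℝ)
    (hxm : ∀ i, Measurable fun ω => x ω i) (hxL : ∀ i, MemLp (fun ω => x ω i) 2 μ)
    (hwm : ∀ j, Measurable fun ω => w ω j) (hwL : ∀ j, MemLp (fun ω => w ω j) 2 μ)
    (Ewwp : Matrix (Fin r) (Fin r) ℝ) (hEwwp : IsMoorePenrose (secondMoment μ w w) Ewwp)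
    (M : Matrix (Fin r) (Fin r) ℝ) :
    ∀ T' : Matrix (Fin m) (Fin r) ℝ,
      mse μ x w (secondMoment μ x w * Ewwp * (1 + M * (1 - secondMoment μ w w * Ewwp)))
        ≤ mse μ x w T' := by
  intro T'
  set E := secondMoment μ w w with hE
  set C := secondMoment μ x w with hC
  set T : Matrix (Fin m) (Fin r) ℝ := C * Ewwp * (1 + M * (1 - E * Ewwp)) with hT
  set D : Matrix (Fin m) (Fin r) ℝ := T - T' with hD
  have hww : ∀ j k : Fin r, Integrable (fun ω => w ω j * w ω k) μ :=
    fun j k => int_mul_L2 (hwL j) (hwL k)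
  have hxw : ∀ (i : Fin m) (j : Fin r), Integrable (fun ω => x ω i * w ω j) μ :=
    fun i j => int_mul_L2 (hxL i) (hwL j)
  have hEentry : ∀ j k : Fin r, E j k = ∫ ω, w ω j * w ω k ∂μ := fun j k => rfl
  have hCentry : ∀ (i : Fin m) (j : Fin r), C i j = ∫ ω, x ω i * w ω j ∂μ := fun i j => rfl
  -- L2-ness of components of A.mulVec (w ω)
  have hmv : ∀ (A : Matrix (Fin m) (Fin r) ℝ) (i : Fin m),
      MemLp (fun ω => A.mulVec (w ω) i) 2 μ := by
    intro A i
    have h : (fun ω => A.mulVec (w ω) i) = fun ω => ∑ j, A i j * w ω j := by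
      ext ω; simp [Matrix.mulVec, dotProduct]
    rw [h]
    exact memL2_sum _ _ (fun j _ => (hwL j).const_mul _)
  -- kernel fact: E v = 0 → C v = 0
  have hker : ∀ v : Fin r → ℝ, E.mulVec v = 0 → C.mulVec v = 0 := by
    intro v hv
    set g : Ω → ℝ := fun ω => ∑ j, v j * w ω j with hg
    have hgL : MemLp g 2 μ := memL2_sum _ _ (fun j _ => (hwL j).const_mul _)
    have hgm : Measurable g := by
      apply Finset.measurable_sum
      intro j _; exact (measurable_const.mul (hwm j))
    have hg2 : ∫ ω, g ω ^ 2 ∂μ = 0 := by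
      have hpt : ∀ ω, g ω ^ 2 = ∑ j, ∑ k, v j * v k * (w ω j * w ω k) := by
        intro ω
        rw [hg, pow_two, Finset.sum_mul_sum]
        apply Finset.sum_congr rfl; intro j _
        apply Finset.sum_congr rfl; intro k _
        ring
      simp_rw [hpt]
      rw [integral_finset_sum _ (fun j _ => integrable_finset_sum _
        (fun k _ => (hww j k).const_mul _))]
      have hrow : ∀ j : Fin r, ∫ ω, ∑ k, v j * v k * (w ω j * w ω k) ∂μ
          = v j * (E.mulVec v j) := by
        intro j
        rw [integral_finset_sum _ (fun k _ => (hww j k).const_mul _)]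
        simp_rw [integral_const_mul]
        rw [Matrix.mulVec, dotProduct, Finset.mul_sum]
        apply Finset.sum_congr rfl; intro k _
        rw [hEentry j k]; ring
      simp_rw [hrow, hv]
      simp
    have hgz : g =ᵐ[μ] 0 := by
      have h0 : (fun ω => g ω ^ 2) =ᵐ[μ] 0 := by
        rw [← integral_eq_zero_iff_of_nonneg (fun ω => sq_nonneg (g ω)) (int_sq_L2 hgL)]
        exact hg2
      filter_upwards [h0] with ω hω
      exact pow_eq_zero_iff (n := 2) (by norm_num) |>.mp hω
    funext i
    have h1 : C.mulVec v i = ∫ ω, x ω i * g ω ∂μ := by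
      rw [Matrix.mulVec, dotProduct]
      have hpt : ∀ ω, x ω i * g ω = ∑ j, v j * (x ω i * w ω j) := by
        intro ω; rw [hg, Finset.mul_sum]
        apply Finset.sum_congr rfl; intro j _; ring
      simp_rw [hpt]
      rw [integral_finset_sum _ (fun j _ => (hxw i j).const_mul _)]
      simp_rw [integral_const_mul]
      apply Finset.sum_congr rfl; intro j _
      rw [hCentry i j]; ring
    have h2 : ∫ ω, x ω i * g ω ∂μ = 0 := by
      have : (fun ω => x ω i * g ω) =ᵐ[μ] 0 := by
        filter_upwards [hgz] with ω hω
        simp [hω]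
      rw [integral_congr_ae this]; simp
    rw [h1, h2]; rfl
  -- matrix algebra: T * E = C
  have h1 : E * Ewwp * E = E := hEwwp.1
  have hCE : C * Ewwp * E = C := by
    have hN : E * (1 - Ewwp * E) = 0 := by
      rw [mul_sub, mul_one, ← mul_assoc, h1, sub_self]
    have hCN : C * (1 - Ewwp * E) = 0 := by
      ext i k
      have hv : E.mulVec (fun j => (1 - Ewwp * E) j k) = 0 := by
        funext j
        have h0 : (E * (1 - Ewwp * E)) j k = (0 : Matrix (Fin r) (Fin r) ℝ) j k := by
          rw [hN]
        simpa [Matrix.mul_apply, Matrix.mulVec, dotProduct] using h0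
      have h2 := congrFun (hker _ hv) i
      simpa [Matrix.mul_apply, Matrix.mulVec, dotProduct] using h2
    rw [Matrix.mul_sub, Matrix.mul_one] at hCN
    rw [Matrix.mul_assoc]
    rw [sub_eq_zero] at hCN
    exact hCN.symm
  have hTE : T * E = C := by
    have hz : (1 - E * Ewwp) * E = 0 := by
      rw [sub_mul, one_mul, h1, sub_self]
    rw [hT, Matrix.mul_add, Matrix.mul_one, Matrix.add_mul,
      Matrix.mul_assoc (C * Ewwp) (M * (1 - E * Ewwp)) E,
      Matrix.mul_assoc M (1 - E * Ewwp) E, hz, Matrix.mul_zero, Matrix.mul_zero,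
      add_zero, hCE]
  -- cross term vanishes
  have hTwL := hmv T
  have hDwL := hmv D
  have hdiff : ∀ i, MemLp (fun ω => x ω i - T.mulVec (w ω) i) 2 μ :=
    fun i => (hxL i).sub (hTwL i)
  have hdiff' : ∀ i, MemLp (fun ω => x ω i - T'.mulVec (w ω) i) 2 μ :=
    fun i => (hxL i).sub (hmv T' i)
  have hcross : ∀ (i : Fin m) (j : Fin r),
      ∫ ω, (x ω i - T.mulVec (w ω) i) * w ω j ∂μ = 0 := by
    intro i j
    have hpt : ∀ ω, (x ω i - T.mulVec (w ω) i) * w ω j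
        = x ω i * w ω j - ∑ k, T i k * (w ω k * w ω j) := by
      intro ω
      rw [Matrix.mulVec, dotProduct, sub_mul, Finset.sum_mul]
      congr 1
      apply Finset.sum_congr rfl; intro k _; ring
    simp_rw [hpt]
    rw [integral_sub (hxw i j) (integrable_finset_sum _ (fun k _ => (hww k j).const_mul _))]
    rw [integral_finset_sum _ (fun k _ => (hww k j).const_mul _)]
    simp_rw [integral_const_mul]
    have : ∑ k, T i k * ∫ ω, w ω k * w ω j ∂μ = (T * E) i j := by
      rw [Matrix.mul_apply]
      apply Finset.sum_congr rfl; intro k _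
      rw [hEentry k j]
    rw [this, hTE, ← hCentry i j, sub_self]
  -- main expansion
  have key : mse μ x w T' = mse μ x w T + ∫ ω, ∑ i, (D.mulVec (w ω) i) ^ 2 ∂μ := by
    unfold mse
    rw [integral_finset_sum _ (fun i _ => int_sq_L2 (hdiff' i)),
      integral_finset_sum _ (fun i _ => int_sq_L2 (hdiff i)),
      integral_finset_sum _ (fun i _ => int_sq_L2 (hDwL i)),
      ← Finset.sum_add_distrib]
    apply Finset.sum_congr rfl; intro i _
    have hpe : (fun ω => (x ω i - T'.mulVec (w ω) i) ^ 2)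
        = fun ω => (x ω i - T.mulVec (w ω) i) ^ 2
          + (2 * ((x ω i - T.mulVec (w ω) i) * D.mulVec (w ω) i)
            + (D.mulVec (w ω) i) ^ 2) := by
      funext ω
      have hx' : T'.mulVec (w ω) i = T.mulVec (w ω) i - D.mulVec (w ω) i := by
        rw [hD, Matrix.sub_mulVec]; simp
      rw [hx']; ring
    have intgh : Integrable (fun ω =>
        2 * ((x ω i - T.mulVec (w ω) i) * D.mulVec (w ω) i) + (D.mulVec (w ω) i) ^ 2) μ :=
      ((int_mul_L2 (hdiff i) (hDwL i)).const_mul 2).add (int_sq_L2 (hDwL i))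
    rw [hpe, integral_add (int_sq_L2 (hdiff i)) intgh,
      integral_add ((int_mul_L2 (hdiff i) (hDwL i)).const_mul 2) (int_sq_L2 (hDwL i))]
    have h2c : ∫ ω, 2 * ((x ω i - T.mulVec (w ω) i) * D.mulVec (w ω) i) ∂μ = 0 := by
      rw [integral_const_mul]
      have hin : ∫ ω, (x ω i - T.mulVec (w ω) i) * D.mulVec (w ω) i ∂μ = 0 := by
        have hpt2 : ∀ ω, (x ω i - T.mulVec (w ω) i) * D.mulVec (w ω) i
            = ∑ j, D i j * ((x ω i - T.mulVec (w ω) i) * w ω j) := by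
          intro ω
          have hdw : D.mulVec (w ω) i = ∑ j, D i j * w ω j := by
            simp [Matrix.mulVec, dotProduct]
          rw [hdw, Finset.mul_sum]
          apply Finset.sum_congr rfl; intro j _; ring
        simp_rw [hpt2]
        rw [integral_finset_sum _ (fun j _ =>
          (int_mul_L2 (hdiff i) (hwL j)).const_mul _)]
        apply Finset.sum_eq_zero; intro j _
        rw [integral_const_mul, hcross i j, mul_zero]
      rw [hin, mul_zero]
    rw [h2c, zero_add]
  rw [key]
  have : 0 ≤ ∫ ω, ∑ i, (D.mulVec (w ω) i) ^ 2 ∂μ :=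
    integral_nonneg (fun ω => Finset.sum_nonneg (fun i _ => sq_nonneg _))
  linarith
end

section
/- Let x : Ω → ℝ^m and w : Ω → ℝ^r be random vectors on a probability space (Ω, μ) whose coordinate functions are measurable and square-integrable. Let E_{ww}⁺ be a Moore–Penrose pseudoinverse of E_{ww}, let R = (E_{ww})^{1/2} be the positive semidefinite square root of E_{ww}, and let R⁺ be a Moore–Penrose pseudoinverse of R. Then the minimal mean square error of linear estimation is given by: with T̂ = E_{xw} E_{ww}⁺, ∫_Ω ‖x(ω) − T̂ w(ω)‖₂² dμ(ω) = tr(E_{xx}) − ‖E_{xw} R⁺‖_F². -/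
open MeasureTheory Matrix

/-- Squared Frobenius norm `‖A‖_F² = tr (A Aᵀ)`. -/
noncomputable def frobSq {a b : ℕ} (A : Matrix (Fin a) (Fin b) ℝ) : ℝ :=
  (A * Aᵀ).trace

theorem aux_mp_unique {a : ℕ} {A B C : Matrix (Fin a) (Fin a) ℝ}
    (hB : IsMoorePenrose A B) (hC : IsMoorePenrose A C) : B = C := by
  obtain ⟨hB1, hB2, hB3, hB4⟩ := hB
  obtain ⟨hC1, hC2, hC3, hC4⟩ := hC
  have hAB : A * B = A * C := by
    conv_lhs => rw [← hC1]
    calc A * C * A * B = (A * C) * (A * B) := by noncomm_ring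
    _ = (A * C)ᵀ * (A * B)ᵀ := by rw [hC3, hB3]
    _ = ((A * B) * (A * C))ᵀ := by rw [← Matrix.transpose_mul]
    _ = ((A * B * A) * C)ᵀ := by noncomm_ring
    _ = (A * C)ᵀ := by rw [hB1]
    _ = A * C := hC3
  have hBA : B * A = C * A := by
    conv_lhs => rw [← hC1]
    calc B * (A * C * A) = (B * A) * (C * A) := by noncomm_ring
    _ = (B * A)ᵀ * (C * A)ᵀ := by rw [hC4, hB4]
    _ = ((C * A) * (B * A))ᵀ := by rw [← Matrix.transpose_mul]
    _ = (C * (A * B * A))ᵀ := by noncomm_ring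
    _ = (C * A)ᵀ := by rw [hB1]
    _ = C * A := hC4
  calc B = B * A * B := hB2.symm
  _ = B * (A * C) := by rw [← hAB]; noncomm_ring
  _ = (B * A) * C := by noncomm_ring
  _ = C * A * C := by rw [hBA]
  _ = C := hC2

theorem aux_mp_transpose {a : ℕ} {A B : Matrix (Fin a) (Fin a) ℝ}
    (h : IsMoorePenrose A B) : IsMoorePenrose Aᵀ Bᵀ := by
  obtain ⟨h1, h2, h3, h4⟩ := h
  refine ⟨?_, ?_, ?_, ?_⟩
  · calc Aᵀ * Bᵀ * Aᵀ = (A * (B * A))ᵀ := by simp [Matrix.transpose_mul, Matrix.mul_assoc]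
    _ = Aᵀ := by rw [← Matrix.mul_assoc, h1]
  · calc Bᵀ * Aᵀ * Bᵀ = (B * (A * B))ᵀ := by simp [Matrix.transpose_mul, Matrix.mul_assoc]
    _ = Bᵀ := by rw [← Matrix.mul_assoc, h2]
  · calc (Aᵀ * Bᵀ)ᵀ = ((B * A)ᵀ)ᵀ := by simp [Matrix.transpose_mul]
    _ = Aᵀ * Bᵀ := by rw [h4, Matrix.transpose_mul]
  · calc (Bᵀ * Aᵀ)ᵀ = ((A * B)ᵀ)ᵀ := by simp [Matrix.transpose_mul]
    _ = Bᵀ * Aᵀ := by rw [h3, Matrix.transpose_mul]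

theorem aux_mp_symm {a : ℕ} {A B : Matrix (Fin a) (Fin a) ℝ} (hA : Aᵀ = A)
    (h : IsMoorePenrose A B) : Bᵀ = B := by
  have h' := aux_mp_transpose h
  rw [hA] at h'
  exact aux_mp_unique h' h

theorem aux_mp_sq {a : ℕ} {R Rp : Matrix (Fin a) (Fin a) ℝ} (hR : Rᵀ = R)
    (h : IsMoorePenrose R Rp) : IsMoorePenrose (R * R) (Rp * Rp) := by
  obtain ⟨h1, h2, h3, h4⟩ := h
  have hRps : Rpᵀ = Rp := aux_mp_symm hR ⟨h1, h2, h3, h4⟩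
  have hcomm : R * Rp = Rp * R := by
    calc R * Rp = (R * Rp)ᵀ := h3.symm
    _ = Rpᵀ * Rᵀ := by rw [Matrix.transpose_mul]
    _ = Rp * R := by rw [hRps, hR]
  have hP : R * Rp * (R * Rp) = R * Rp := by
    calc R * Rp * (R * Rp) = (R * Rp * R) * Rp := by noncomm_ring
    _ = R * Rp := by rw [h1]
  have hQ : Rp * R * (Rp * R) = Rp * R := by
    calc Rp * R * (Rp * R) = (Rp * R * Rp) * R := by noncomm_ring
    _ = Rp * R := by rw [h2]
  refine ⟨?_, ?_, ?_, ?_⟩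
  · calc R * R * (Rp * Rp) * (R * R) = R * ((R * Rp) * (Rp * R)) * R := by noncomm_ring
    _ = R * ((Rp * R) * (Rp * R)) * R := by rw [hcomm]
    _ = R * (Rp * R) * R := by rw [hQ]
    _ = (R * Rp * R) * R := by noncomm_ring
    _ = R * R := by rw [h1]
  · calc Rp * Rp * (R * R) * (Rp * Rp) = Rp * ((Rp * R) * (R * Rp)) * Rp := by noncomm_ring
    _ = Rp * ((R * Rp) * (R * Rp)) * Rp := by rw [← hcomm]
    _ = Rp * (R * Rp) * Rp := by rw [hP]
    _ = (Rp * R * Rp) * Rp := by noncomm_ring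
    _ = Rp * Rp := by rw [h2]
  · calc (R * R * (Rp * Rp))ᵀ = (R * ((R * Rp) * Rp))ᵀ := by noncomm_ring
    _ = (R * ((Rp * R) * Rp))ᵀ := by rw [hcomm]
    _ = ((R * Rp) * (R * Rp))ᵀ := by noncomm_ring
    _ = (R * Rp)ᵀ := by rw [hP]
    _ = R * Rp := h3
    _ = (R * Rp) * (R * Rp) := hP.symm
    _ = R * ((Rp * R) * Rp) := by noncomm_ring
    _ = R * ((R * Rp) * Rp) := by rw [← hcomm]
    _ = R * R * (Rp * Rp) := by noncomm_ring
  · calc (Rp * Rp * (R * R))ᵀ = (Rp * ((Rp * R) * R))ᵀ := by noncomm_ring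
    _ = (Rp * ((R * Rp) * R))ᵀ := by rw [← hcomm]
    _ = ((Rp * R) * (Rp * R))ᵀ := by noncomm_ring
    _ = (Rp * R)ᵀ := by rw [hQ]
    _ = Rp * R := h4
    _ = (Rp * R) * (Rp * R) := hQ.symm
    _ = Rp * ((R * Rp) * R) := by noncomm_ring
    _ = Rp * ((Rp * R) * R) := by rw [hcomm]
    _ = Rp * Rp * (R * R) := by noncomm_ring

theorem aux_integrable_mul {Ω : Type*} [MeasurableSpace Ω] {μ : Measure Ω} {f g : Ω → ℝ}
    (hf : MemLp f 2 μ) (hg : MemLp g 2 μ) : Integrable (fun ω => f ω * g ω) μ := by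
  have h1 : Integrable (fun ω => (f ω + g ω) ^ 2) μ := (hf.add hg).integrable_sq
  have h2 : Integrable (fun ω => f ω ^ 2) μ := hf.integrable_sq
  have h3 : Integrable (fun ω => g ω ^ 2) μ := hg.integrable_sq
  have h : Integrable (fun ω => ((f ω + g ω) ^ 2 - f ω ^ 2 - g ω ^ 2) / 2) μ :=
    ((h1.sub h2).sub h3).div_const 2
  refine h.congr ?_
  filter_upwards with ω
  ring

theorem aux_mse_expand {Ω : Type*} [MeasurableSpace Ω] (μ : Measure Ω)
    [IsProbabilityMeasure μ] {m r : ℕ}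
    (x : Ω → Fin m → ℝ) (w : Ω → Fin r → ℝ)
    (hxL : ∀ i, MemLp (fun ω => x ω i) 2 μ)
    (hwL : ∀ j, MemLp (fun ω => w ω j) 2 μ)
    (T : Matrix (Fin m) (Fin r) ℝ) :
    mse μ x w T = (secondMoment μ x x).trace
      - 2 * (T * (secondMoment μ x w)ᵀ).trace + (T * secondMoment μ w w * Tᵀ).trace := by
  have hxw : ∀ i j, Integrable (fun ω => x ω i * w ω j) μ :=
    fun i j => aux_integrable_mul (hxL i) (hwL j)
  have hww : ∀ j k, Integrable (fun ω => w ω j * w ω k) μ :=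
    fun j k => aux_integrable_mul (hwL j) (hwL k)
  have hxx : ∀ i, Integrable (fun ω => x ω i * x ω i) μ :=
    fun i => aux_integrable_mul (hxL i) (hxL i)
  have hs1 : ∀ i, Integrable (fun ω => ∑ j, T i j * (x ω i * w ω j)) μ := by
    intro i
    exact integrable_finset_sum _ fun j _ => (hxw i j).const_mul _
  have hs2 : ∀ i, Integrable (fun ω => ∑ j, ∑ k, T i j * T i k * (w ω j * w ω k)) μ := by
    intro i
    exact integrable_finset_sum _ fun j _ =>
      integrable_finset_sum _ fun k _ => (hww j k).const_mul _
  have hpt : ∀ ω (i : Fin m), (x ω i - T.mulVec (w ω) i) ^ 2 =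
      x ω i * x ω i - 2 * ∑ j, T i j * (x ω i * w ω j)
        + ∑ j, ∑ k, T i j * T i k * (w ω j * w ω k) := by
    intro ω i
    have e1 : x ω i * ∑ j, T i j * w ω j = ∑ j, T i j * (x ω i * w ω j) := by
      rw [Finset.mul_sum]
      exact Finset.sum_congr rfl fun j _ => by ring
    have e2 : (∑ j, T i j * w ω j) * (∑ k, T i k * w ω k)
        = ∑ j, ∑ k, T i j * T i k * (w ω j * w ω k) := by
      rw [Finset.sum_mul_sum]
      exact Finset.sum_congr rfl fun j _ => Finset.sum_congr rfl fun k _ => by ring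
    simp only [Matrix.mulVec, dotProduct]
    calc (x ω i - ∑ j, T i j * w ω j) ^ 2
        = x ω i * x ω i - 2 * (x ω i * ∑ j, T i j * w ω j)
          + (∑ j, T i j * w ω j) * (∑ k, T i k * w ω k) := by ring
    _ = _ := by rw [e1, e2]
  have hFi : ∀ i, Integrable (fun ω => x ω i * x ω i - 2 * ∑ j, T i j * (x ω i * w ω j)
      + ∑ j, ∑ k, T i j * T i k * (w ω j * w ω k)) μ :=
    fun i => ((hxx i).sub ((hs1 i).const_mul 2)).add (hs2 i)
  have key : ∀ i, ∫ ω, (x ω i - T.mulVec (w ω) i) ^ 2 ∂μ =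
      (secondMoment μ x x) i i - 2 * ∑ j, T i j * (secondMoment μ x w) i j
        + ∑ j, ∑ k, T i j * T i k * (secondMoment μ w w) j k := by
    intro i
    have : (fun ω => (x ω i - T.mulVec (w ω) i) ^ 2)
        = fun ω => x ω i * x ω i - 2 * ∑ j, T i j * (x ω i * w ω j)
          + ∑ j, ∑ k, T i j * T i k * (w ω j * w ω k) := funext fun ω => hpt ω i
    have hA : Integrable (fun ω => x ω i * x ω i
        - 2 * ∑ j, T i j * (x ω i * w ω j)) μ := by
      exact (hxx i).sub ((hs1 i).const_mul 2)
    have hB : Integrable (fun ω => 2 * ∑ j, T i j * (x ω i * w ω j)) μ := by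
      exact (hs1 i).const_mul 2
    rw [this, integral_add hA (hs2 i),
      integral_sub (hxx i) hB, MeasureTheory.integral_const_mul,
      integral_finset_sum _ fun j _ => (hxw i j).const_mul _,
      integral_finset_sum _ fun j _ =>
        integrable_finset_sum _ fun k _ => (hww j k).const_mul _]
    simp only [MeasureTheory.integral_const_mul, secondMoment, Matrix.of_apply]
    congr 1
    exact Finset.sum_congr rfl fun j _ => by
      rw [integral_finset_sum _ fun k _ => (hww j k).const_mul _]
      exact Finset.sum_congr rfl fun k _ => by rw [MeasureTheory.integral_const_mul]
  have hmse : mse μ x w T = ∑ i, ∫ ω, (x ω i - T.mulVec (w ω) i) ^ 2 ∂μ := by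
    unfold mse
    rw [show (fun ω => ∑ i, (x ω i - T.mulVec (w ω) i) ^ 2)
        = fun ω => ∑ i, (x ω i * x ω i - 2 * ∑ j, T i j * (x ω i * w ω j)
          + ∑ j, ∑ k, T i j * T i k * (w ω j * w ω k)) from
      funext fun ω => Finset.sum_congr rfl fun i _ => hpt ω i,
      integral_finset_sum _ fun i _ => hFi i]
    exact Finset.sum_congr rfl fun i _ => by
      rw [show (fun ω => (x ω i - T.mulVec (w ω) i) ^ 2)
          = fun ω => x ω i * x ω i - 2 * ∑ j, T i j * (x ω i * w ω j)
            + ∑ j, ∑ k, T i j * T i k * (w ω j * w ω k) from funext fun ω => hpt ω i]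
  have t1 : (secondMoment μ x x).trace = ∑ i, (secondMoment μ x x) i i := by
    simp [Matrix.trace, Matrix.diag]
  have t2 : (T * (secondMoment μ x w)ᵀ).trace
      = ∑ i, ∑ j, T i j * (secondMoment μ x w) i j := by
    simp [Matrix.trace, Matrix.diag, Matrix.mul_apply, Matrix.transpose_apply]
  have t3 : (T * secondMoment μ w w * Tᵀ).trace
      = ∑ i, ∑ j, ∑ k, T i j * T i k * (secondMoment μ w w) j k := by
    rw [Matrix.trace]
    simp only [Matrix.diag_apply, Matrix.mul_apply, Matrix.transpose_apply]
    refine Finset.sum_congr rfl fun i _ => ?_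
    rw [Finset.sum_comm]
    refine Finset.sum_congr rfl fun j _ => ?_
    rw [Finset.sum_mul]
    refine Finset.sum_congr rfl fun k _ => ?_
    ring
  rw [hmse, t1, t2, t3]
  simp only [key]
  rw [Finset.sum_add_distrib, Finset.sum_sub_distrib, ← Finset.mul_sum]

theorem minimal_mse_linear_estimation {Ω : Type*} [MeasurableSpace Ω] (μ : Measure Ω)
    [IsProbabilityMeasure μ] {m r : ℕ}
    (x : Ω → Fin m → ℝ) (w : Ω → Fin r → ℝ)
    (hxm : ∀ i, Measurable fun ω => x ω i) (hxL : ∀ i, MemLp (fun ω => x ω i) 2 μ)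
    (hwm : ∀ j, Measurable fun ω => w ω j) (hwL : ∀ j, MemLp (fun ω => w ω j) 2 μ)
    (Ewwp : Matrix (Fin r) (Fin r) ℝ) (hEwwp : IsMoorePenrose (secondMoment μ w w) Ewwp)
    (R : Matrix (Fin r) (Fin r) ℝ) (hRpsd : R.PosSemidef)
    (hRsq : R * R = secondMoment μ w w)
    (Rp : Matrix (Fin r) (Fin r) ℝ) (hRp : IsMoorePenrose R Rp) :
    mse μ x w (secondMoment μ x w * Ewwp) =
      (secondMoment μ x x).trace - frobSq (secondMoment μ x w * Rp) := by
  set Exw := secondMoment μ x w with hExw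
  set Eww := secondMoment μ w w with hEww
  have hEwws : Ewwᵀ = Eww := by
    ext i j
    simp [hEww, secondMoment, Matrix.transpose_apply, mul_comm]
  have hEwwps : Ewwpᵀ = Ewwp := aux_mp_symm hEwws hEwwp
  have hRs : Rᵀ = R := by
    rw [← Matrix.conjTranspose_eq_transpose_of_trivial]
    exact hRpsd.isHermitian
  have hRps : Rpᵀ = Rp := aux_mp_symm hRs hRp
  have hRpSq : Rp * Rp = Ewwp := by
    have h := aux_mp_sq hRs hRp
    rw [hRsq] at h
    exact aux_mp_unique h hEwwp
  obtain ⟨h1, h2, h3, h4⟩ := hEwwp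
  rw [aux_mse_expand μ x w hxL hwL]
  have hterm3 : Exw * Ewwp * Eww * (Exw * Ewwp)ᵀ = Exw * Ewwp * Exwᵀ := by
    rw [Matrix.transpose_mul, hEwwps]
    calc Exw * Ewwp * Eww * (Ewwp * Exwᵀ) = Exw * ((Ewwp * Eww * Ewwp) * Exwᵀ) := by
          simp only [Matrix.mul_assoc]
    _ = Exw * (Ewwp * Exwᵀ) := by rw [h2]
    _ = Exw * Ewwp * Exwᵀ := by rw [Matrix.mul_assoc]
  have hterm2 : Exw * Ewwp * Exwᵀ = Exw * Ewwp * Exwᵀ := rfl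
  have hfrob : frobSq (Exw * Rp) = (Exw * Ewwp * Exwᵀ).trace := by
    unfold frobSq
    rw [Matrix.transpose_mul, hRps]
    congr 1
    calc Exw * Rp * (Rp * Exwᵀ) = Exw * ((Rp * Rp) * Exwᵀ) := by
          simp only [Matrix.mul_assoc]
    _ = Exw * (Ewwp * Exwᵀ) := by rw [hRpSq]
    _ = Exw * Ewwp * Exwᵀ := by rw [Matrix.mul_assoc]
  simp only [← hExw, ← hEww]
  rw [hterm3, hfrob]
  ring
end
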